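/- Let M be a 3-connected matroid, let (X, {e}, Y) be a vertical 3-separation of M, and let y ∈ Y. If y ∈ cl(X), then (X ∪ {y}, {e}, Y − {y}) is a vertical 3-separation of M. If instead y ∈ cl*(X) and e is not contained in any triangle of M, then (X ∪ {y}, {e}, Y − {y}) is also a vertical 3-separation of M. -/

import Mathlib

open Matroid Set

namespace DetPairs

variable {α : Type*}

/-- The rank of a set in a matroid: the maximum size of an independent subset
(as an integer, for convenient arithmetic). -/
noncomputable def r (M : Matroid α) (X : Set α) : ℤ :=
  ((sSup (Set.ncard '' {I | M.Indep I ∧ I ⊆ X}) : ℕ) : ℤ)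

/-- The connectivity function `λ_M(X) = r(X) + r(E − X) − r(M)`. -/
noncomputable def lam (M : Matroid α) (X : Set α) : ℤ :=
  r M X + r M (M.E \ X) - r M M.E

/-- Local connectivity `⊓(X,Y) = r(X) + r(Y) − r(X ∪ Y)`. -/
noncomputable def localConn (M : Matroid α) (X Y : Set α) : ℤ :=
  r M X + r M Y - r M (X ∪ Y)

/-- A circuit: a minimal dependent set. -/
def Circuit (M : Matroid α) (C : Set α) : Prop :=
  C ⊆ M.E ∧ ¬ M.Indep C ∧ ∀ D, D ⊂ C → M.Indep D

/-- A cocircuit: a circuit of the dual. -/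
def Cocircuit (M : Matroid α) (C : Set α) : Prop := Circuit M✶ C

/-- A triangle: a 3-element circuit. -/
def Triangle (M : Matroid α) (T : Set α) : Prop := Circuit M T ∧ T.ncard = 3

/-- A triad: a 3-element cocircuit. -/
def Triad (M : Matroid α) (T : Set α) : Prop := Cocircuit M T ∧ T.ncard = 3

/-- A quad: a 4-element set that is both a circuit and a cocircuit. -/
def Quad (M : Matroid α) (Q : Set α) : Prop :=
  Circuit M Q ∧ Cocircuit M Q ∧ Q.ncard = 4

/-- Deletion of a set of elements. -/
def Del (M : Matroid α) (D : Set α) : Matroid α := M ↾ (M.E \ D)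

/-- Contraction of a set of elements. -/
def Con (M : Matroid α) (C : Set α) : Matroid α := (M✶ ↾ (M.E \ C))✶

/-- `M` is 3-connected: it has no `k`-separation for `k = 1, 2`, where a
`k`-separation is a set `X` with `λ(X) = k − 1`, `|X| ≥ k` and `|E − X| ≥ k`. -/
def ThreeConnected (M : Matroid α) : Prop :=
  ∀ k : ℕ, 0 < k → k < 3 → ∀ X ⊆ M.E,
    ¬ (lam M X = (k : ℤ) - 1 ∧ (k : ℤ) ≤ X.ncard ∧ (k : ℤ) ≤ (M.E \ X).ncard)

/-- A detachable pair: distinct elements `e, f` such that `M \ e \ f` or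
`M / e / f` is 3-connected. -/
def DetachablePair (M : Matroid α) (e f : α) : Prop :=
  e ≠ f ∧ e ∈ M.E ∧ f ∈ M.E ∧
    (ThreeConnected (Del M {e, f}) ∨ ThreeConnected (Con M {e, f}))

/-- The triple of elements with indices `i, i+1, i+2` in an ordering. -/
def tri (e : ℕ → α) (i : ℕ) : Set α := {e i, e (i + 1), e (i + 2)}

/-- `(e 0, …, e (n-1))` is a fan ordering of length `n ≥ 3` in `M`:
consecutive triples alternate between triangles and triads. -/
def FanOrd (M : Matroid α) (n : ℕ) (e : ℕ → α) : Prop :=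
  3 ≤ n ∧ Set.InjOn e (Set.Iio n) ∧ (∀ i < n, e i ∈ M.E) ∧
    (Triangle M (tri e 0) ∨ Triad M (tri e 0)) ∧
    ∀ i, i + 3 < n →
      (Triangle M (tri e i) → Triad M (tri e (i + 1))) ∧
      (Triad M (tri e i) → Triangle M (tri e (i + 1)))

/-- A fan (as a set): either a 2-element subset of the ground set, or the
underlying set of a fan ordering of length at least 3. -/
def IsFan (M : Matroid α) (F : Set α) : Prop :=
  (F ⊆ M.E ∧ F.ncard = 2) ∨ ∃ n e, FanOrd M n e ∧ F = e '' Set.Iio n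

/-- A maximal fan: a fan contained in no strictly larger fan. -/
def MaximalFan (M : Matroid α) (F : Set α) : Prop :=
  IsFan M F ∧ ∀ F', IsFan M F' → F ⊆ F' → F' = F

/-- `M` is a wheel or a whirl: its ground set has a cyclic ordering of even size
`2n` in which consecutive triples alternate between triangles and triads. -/
def IsWheelOrWhirl (M : Matroid α) : Prop :=
  ∃ (n : ℕ) (e : ℕ → α), 2 ≤ n ∧ Set.InjOn e (Set.Iio (2 * n)) ∧
    M.E = e '' Set.Iio (2 * n) ∧
    ∀ i < 2 * n,
      (i % 2 = 0 → Triangle M {e i, e ((i + 1) % (2 * n)), e ((i + 2) % (2 * n))}) ∧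
      (i % 2 = 1 → Triad M {e i, e ((i + 1) % (2 * n)), e ((i + 2) % (2 * n))})

/-- An `M(K₄)`-separator: a 6-element set `{a,b,c,x,y,z}` where `{x,y,z}` is a
triad and `{a,b,c}`, `{a,x,y}`, `{b,x,z}`, `{c,y,z}` are triangles. -/
def MK4Sep (M : Matroid α) (S : Set α) : Prop :=
  ∃ a b c x y z : α, S = {a, b, c, x, y, z} ∧ S.ncard = 6 ∧
    Triad M {x, y, z} ∧ Triangle M {a, b, c} ∧ Triangle M {a, x, y} ∧
    Triangle M {b, x, z} ∧ Triangle M {c, y, z}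

/-- A vertical 3-separation `(X, {e}, Y)` of `M`. -/
def VertThreeSep (M : Matroid α) (X : Set α) (e : α) (Y : Set α) : Prop :=
  X ∪ {e} ∪ Y = M.E ∧ Disjoint X Y ∧ e ∉ X ∧ e ∉ Y ∧
    lam M X = 2 ∧ lam M Y = 2 ∧ e ∈ M.closure X ∧ e ∈ M.closure Y ∧
    3 ≤ r M X ∧ 3 ≤ r M Y

/-- `N` is a simplification of `M`: a restriction of `M` to a set of
representatives, one from each parallel class of nonloops. -/
def SimplificationOf (M N : Matroid α) : Prop :=
  ∃ X : Set α, (∀ x ∈ X, x ∈ M.E ∧ x ∉ M.closure ∅) ∧ N = M ↾ X ∧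
    ∀ y ∈ M.E, y ∉ M.closure ∅ →
      ∃! x, x ∈ X ∧ M.closure {y} = M.closure {x}

/-!
In both cases moving `y` from `Y` to `X` does not increase the connectivity of either side. If
`y ∈ cl(X)`, then `r(X ∪ y) = r(X)` while `Y - y` and `(Y - y) ∪ e` can only lose rank. If
`y ∈ cl*(X)`, then `y` is a coloop of both `M | (Y ∪ e)` and `M | Y`, so deleting it lowers both
ranks by exactly one, which pays for the possible increase of `r(X ∪ y)`. Three-connectivity then
forces `λ(X ∪ y) = λ(Y - y) = 2`, and comparing the two values gives `e ∈ cl(Y - y)`. What remains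
is `r(Y - y) ≥ 3`: in the coclosure case it could only fail if `(Y - y) ∪ e` had rank two, and since
a 3-connected matroid is simple, `e` would then lie in a triangle.
-/
section Rank

variable {M : Matroid α} {I X Y : Set α} {e : α}

lemma eRk_eq_r [M.RankFinite] (X : Set α) : M.eRk X = (r M X).toNat := by
  have hfin := (M.isRkFinite_set X).eRk_lt_top.ne
  have hgreatest : IsGreatest (Set.ncard '' {I | M.Indep I ∧ I ⊆ X}) (M.eRk X).toNat := by
    obtain ⟨I, hI⟩ := M.exists_isBasis' X
    refine ⟨⟨I, ⟨hI.indep, hI.subset⟩, ?_⟩, ?_⟩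
    · rw [hI.eRk_eq_encard, ← hI.indep.finite.cast_ncard_eq, ENat.toNat_natCast]
    · rintro _ ⟨J, ⟨hJ, hJX⟩, rfl⟩
      rw [← ENat.natCast_le_natCast, ENat.natCast_toNat hfin, hJ.finite.cast_ncard_eq]
      exact hJ.encard_le_eRk_of_subset hJX
  rw [r, hgreatest.csSup_eq, Int.toNat_natCast, ENat.natCast_toNat hfin]

lemma r_nonneg (M : Matroid α) (X : Set α) : 0 ≤ r M X := Int.natCast_nonneg _

variable [M.RankFinite]

lemma r_mono (h : X ⊆ Y) : r M X ≤ r M Y := by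
  have hle := M.eRk_mono h
  rw [eRk_eq_r, eRk_eq_r, Nat.cast_le] at hle
  have := r_nonneg M X
  have := r_nonneg M Y
  omega

lemma r_insert_le (e : α) (X : Set α) : r M (insert e X) ≤ r M X + 1 := by
  have hle := M.eRk_insert_le_add_one e X
  rw [eRk_eq_r, eRk_eq_r, ← Nat.cast_one, ← Nat.cast_add, Nat.cast_le] at hle
  have := r_nonneg M X
  omega

lemma r_union_le (X Y : Set α) : r M (X ∪ Y) ≤ r M X + r M Y := by
  have hle := M.eRk_union_le_eRk_add_eRk X Y
  rw [eRk_eq_r, eRk_eq_r, eRk_eq_r, ← Nat.cast_add, Nat.cast_le] at hle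
  have := r_nonneg M X
  have := r_nonneg M Y
  omega

lemma r_le_ncard (hX : X.Finite) : r M X ≤ X.ncard := by
  have hle := M.eRk_le_encard X
  rw [eRk_eq_r, ← hX.cast_ncard_eq, Nat.cast_le] at hle
  omega

lemma indep_iff_r_eq_ncard (hI : I.Finite) : M.Indep I ↔ r M I = I.ncard := by
  rw [indep_iff_eRk_eq_encard, eRk_eq_r, ← hI.cast_ncard_eq, Nat.cast_inj]
  have := r_nonneg M I
  omega

lemma r_insert_of_mem_closure (he : e ∈ M.closure X) : r M (insert e X) = r M X := by
  have heq : M.eRk (insert e X) = M.eRk X := by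
    rw [← eRk_insert_closure_eq, insert_eq_of_mem he, eRk_closure_eq]
  rw [eRk_eq_r, eRk_eq_r, Nat.cast_inj] at heq
  have := r_nonneg M X
  have := r_nonneg M (insert e X)
  omega

lemma mem_closure_of_r_insert (he : e ∈ M.E) (h : r M (insert e X) = r M X) :
    e ∈ M.closure X := by
  by_contra heX
  have heq := M.eRk_insert_eq_add_one ⟨he, heX⟩
  rw [eRk_eq_r, eRk_eq_r, h] at heq
  norm_cast at heq
  omega

end Rank

section Dual

variable {M : Matroid α} {X : Set α} {y : α}

lemma r_dual_add_r_ground [M.Finite] (hX : X ⊆ M.E) :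
    r M✶ X + r M M.E = r M (M.E \ X) + X.ncard := by
  have heq := M.eRk_dual_add_eRank X hX
  rw [← eRk_ground, eRk_eq_r, eRk_eq_r, eRk_eq_r, ← (M.set_finite X hX).cast_ncard_eq,
    ← Nat.cast_add, ← Nat.cast_add, Nat.cast_inj] at heq
  have := r_nonneg M✶ X
  have := r_nonneg M M.E
  have := r_nonneg M (M.E \ X)
  omega

/-- An element of `cl*(X) - X` is a coloop of `M | (E - X)`. -/
lemma r_diff_insert_add_one_of_mem_dual_closure [M.Finite] (hX : X ⊆ M.E) (hyX : y ∉ X)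
    (hy : y ∈ M✶.closure X) : r M (M.E \ insert y X) + 1 = r M (M.E \ X) := by
  have hyE : y ∈ M.E := M✶.closure_subset_ground X hy
  have hdual := r_insert_of_mem_closure hy
  have h₁ := r_dual_add_r_ground (insert_subset hyE hX)
  have h₂ := r_dual_add_r_ground hX
  have hcard := ncard_insert_of_notMem hyX (M.set_finite X hX)
  omega

end Dual

section Connectivity

variable {M : Matroid α} {X Z : Set α}

lemma lam_nonneg [M.RankFinite] (hX : X ⊆ M.E) : 0 ≤ lam M X := by
  have := r_union_le (M := M) X (M.E \ X)
  rw [union_sdiff_cancel hX] at this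
  unfold lam
  omega

lemma ThreeConnected.le_lam [M.RankFinite] (hM : ThreeConnected M) (hZ : Z ⊆ M.E) {k : ℕ}
    (hk : k ≤ 2) (hZk : k ≤ Z.ncard) (hZk' : k ≤ (M.E \ Z).ncard) : (k : ℤ) ≤ lam M Z := by
  have h₀ := lam_nonneg hZ
  have h₁ := hM 1 one_pos (by norm_num) Z hZ
  have h₂ := hM 2 two_pos (by norm_num) Z hZ
  interval_cases k <;> push_cast at * <;> omega

lemma ThreeConnected.indep_of_ncard_le_two [M.Finite] (hM : ThreeConnected M)
    (hE : 4 ≤ M.E.ncard) (hZ : Z ⊆ M.E) (hZ2 : Z.ncard ≤ 2) : M.Indep Z := by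
  have hZfin := M.set_finite Z hZ
  by_contra hdep
  have hr := (r_le_ncard hZfin).lt_of_ne (mt (indep_iff_r_eq_ncard hZfin).mpr hdep)
  have hlam : lam M Z ≤ r M Z := by
    have := r_mono (M := M) (sdiff_subset : M.E \ Z ⊆ M.E)
    unfold lam
    omega
  have hcompl := ncard_sdiff hZ hZfin
  have := hM.le_lam hZ hZ2 le_rfl (by omega)
  omega

lemma ThreeConnected.exists_triangle_mem [M.Finite] (hM : ThreeConnected M)
    (hE : 4 ≤ M.E.ncard) (hZ : Z ⊆ M.E) (hZ3 : 3 ≤ Z.ncard) (hr : r M Z ≤ 2) {e : α}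
    (he : e ∈ Z) : ∃ T, Triangle M T ∧ e ∈ T := by
  obtain ⟨f, g, hf, hg, hfg⟩ : ∃ f g, f ∈ Z \ {e} ∧ g ∈ Z \ {e} ∧ f ≠ g := by
    refine (one_lt_ncard_iff (M.set_finite _ (sdiff_subset.trans hZ))).mp ?_
    have := ncard_sdiff_singleton_add_one he (M.set_finite Z hZ)
    omega
  set T : Set α := {e, f, g}
  have hTZ : T ⊆ Z := insert_subset he (pair_subset hf.1 hg.1)
  have hTfin : T.Finite := toFinite T
  have hT3 : T.ncard = 3 := by
    rw [ncard_insert_of_notMem ?_ (toFinite _), ncard_pair hfg]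
    rintro (h | h)
    exacts [hf.2 h.symm, hg.2 h.symm]
  refine ⟨T, ⟨⟨hTZ.trans hZ, fun hT => ?_, fun D hD => ?_⟩, hT3⟩, mem_insert e _⟩
  · have := (indep_iff_r_eq_ncard hTfin).mp hT
    have := r_mono (M := M) hTZ
    omega
  · exact hM.indep_of_ncard_le_two hE (hD.subset.trans (hTZ.trans hZ))
      (by have := ncard_lt_ncard hD hTfin; omega)

lemma ThreeConnected.two_le_lam_of_two_le_r [M.Finite] (hM : ThreeConnected M) (hZ : Z ⊆ M.E)
    (hr : 2 ≤ r M Z) (hr' : 2 ≤ r M (M.E \ Z)) : 2 ≤ lam M Z := by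
  have := r_le_ncard (M := M) (M.set_finite Z hZ)
  have := r_le_ncard (M := M) (M.ground_finite.sdiff (t := Z))
  exact_mod_cast hM.le_lam hZ le_rfl (by omega) (by omega)

end Connectivity

namespace VertThreeSep

variable {M : Matroid α} {X Y : Set α} {e y : α}

section Ground

variable (hsep : VertThreeSep M X e Y)
include hsep

lemma disjoint : Disjoint X Y := hsep.2.1

lemma notMem_left : e ∉ X := hsep.2.2.1

lemma notMem_right : e ∉ Y := hsep.2.2.2.1

lemma lam_left : lam M X = 2 := hsep.2.2.2.2.1

lemma mem_closure_left : e ∈ M.closure X := hsep.2.2.2.2.2.2.1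

lemma mem_closure_right : e ∈ M.closure Y := hsep.2.2.2.2.2.2.2.1

lemma three_le_r_left : 3 ≤ r M X := hsep.2.2.2.2.2.2.2.2.1

lemma three_le_r_right : 3 ≤ r M Y := hsep.2.2.2.2.2.2.2.2.2

lemma subset_ground_left : X ⊆ M.E := by
  rw [← hsep.1]; exact subset_union_left.trans subset_union_left

lemma subset_ground_right : Y ⊆ M.E := by
  rw [← hsep.1]; exact subset_union_right

lemma mem_ground : e ∈ M.E := by
  rw [← hsep.1]; exact Or.inl (Or.inr rfl)

lemma ground_diff_left : M.E \ X = insert e Y := by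
  obtain ⟨hU, hXY, heX, -⟩ := hsep
  rw [← hU]; rw [disjoint_left] at hXY; ext a; grind

lemma ground_diff_insert_left : M.E \ insert e X = Y := by
  obtain ⟨hU, hXY, -, heY, -⟩ := hsep
  rw [← hU]; rw [disjoint_left] at hXY; ext a; grind

lemma ground_diff_insert_insert : M.E \ insert y (insert e X) = Y \ {y} := by
  obtain ⟨hU, hXY, -, heY, -⟩ := hsep
  rw [← hU]; rw [disjoint_left] at hXY; ext a; grind

variable (hy : y ∈ Y)
include hy

lemma ground_diff_insert : M.E \ insert y X = insert e (Y \ {y}) := by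
  obtain ⟨hU, hXY, heX, heY, -⟩ := hsep
  rw [← hU]; rw [disjoint_left] at hXY; ext a; grind

lemma ground_diff_diff_singleton : M.E \ (Y \ {y}) = insert e (insert y X) := by
  obtain ⟨hU, hXY, heX, heY, -⟩ := hsep
  rw [← hU]; rw [disjoint_left] at hXY; ext a; grind

lemma insert_union_diff_singleton : insert y X ∪ {e} ∪ (Y \ {y}) = M.E := by
  rw [← hsep.1]; ext a; grind

end Ground

variable [M.Finite] (hsep : VertThreeSep M X e Y)
include hsep

lemma r_add_r_eq : r M X + r M Y = r M M.E + 2 := by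
  have hlam := hsep.lam_left
  rw [lam, hsep.ground_diff_left, r_insert_of_mem_closure hsep.mem_closure_right] at hlam
  omega

lemma three_le_ncard_left : 3 ≤ X.ncard := by
  have := r_le_ncard (M := M) (M.set_finite X hsep.subset_ground_left)
  have := hsep.three_le_r_left
  omega

lemma three_le_ncard_right : 3 ≤ Y.ncard := by
  have := r_le_ncard (M := M) (M.set_finite Y hsep.subset_ground_right)
  have := hsep.three_le_r_right
  omega

variable (hM : ThreeConnected M) (hy : y ∈ Y)
include hM hy

/-- The closure condition `e ∈ cl(Y - y)` comes for free: it is forced by `λ(X ∪ y) = λ(Y - y)`. -/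
lemma insert_diff_singleton_of_lam_le (hX' : lam M (insert y X) ≤ 2)
    (hY' : lam M (Y \ {y}) ≤ 2) (hr : 3 ≤ r M (Y \ {y})) :
    VertThreeSep M (insert y X) e (Y \ {y}) := by
  have hU := hsep.insert_union_diff_singleton hy
  have hEX' := hsep.ground_diff_insert hy
  have hEY' := hsep.ground_diff_diff_singleton hy
  have heE := hsep.mem_ground
  have hX'E : insert y X ⊆ M.E :=
    insert_subset (hsep.subset_ground_right hy) hsep.subset_ground_left
  have hY'E : Y \ {y} ⊆ M.E := sdiff_subset.trans hsep.subset_ground_right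
  obtain ⟨-, hXY, heX, heY, -, -, heclX, -, hrX, -⟩ := hsep
  have heclX' : e ∈ M.closure (insert y X) := M.closure_subset_closure (subset_insert y X) heclX
  have hrX' : r M X ≤ r M (insert y X) := r_mono (subset_insert y X)
  have hlamX' : lam M (insert y X) = 2 := by
    refine le_antisymm hX' (hM.two_le_lam_of_two_le_r hX'E (by omega) ?_)
    rw [hEX']
    exact le_trans (by omega) (r_mono (subset_insert e _))
  have hlamY' : lam M (Y \ {y}) = 2 := by
    refine le_antisymm hY' (hM.two_le_lam_of_two_le_r hY'E (by omega) ?_)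
    rw [hEY']
    exact le_trans (by omega) (r_mono ((subset_insert y X).trans (subset_insert e _)))
  have hreY' : r M (insert e (Y \ {y})) = r M (Y \ {y}) := by
    rw [lam, hEX'] at hlamX'
    rw [lam, hEY', r_insert_of_mem_closure heclX'] at hlamY'
    omega
  refine ⟨hU, ?_, ?_, fun he => heY he.1, hlamX', hlamY', heclX',
    mem_closure_of_r_insert heE hreY', by omega, hr⟩
  · exact disjoint_insert_left.2 ⟨fun h => h.2 rfl, hXY.mono_right sdiff_subset⟩
  · rintro (rfl | he)
    exacts [heY hy, heX he]

lemma insert_diff_singleton_of_mem_closure (hyX : y ∈ M.closure X) :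
    VertThreeSep M (insert y X) e (Y \ {y}) := by
  have hrXY := hsep.r_add_r_eq
  have hrY := hsep.three_le_r_right
  have hEX' := hsep.ground_diff_insert hy
  have hEY' := hsep.ground_diff_diff_singleton hy
  have hY'E : Y \ {y} ⊆ M.E := sdiff_subset.trans hsep.subset_ground_right
  have hY'card := ncard_sdiff_singleton_add_one hy (M.set_finite Y hsep.subset_ground_right)
  have hY3 := hsep.three_le_ncard_right
  have hX3 := hsep.three_le_ncard_left
  have hX'card := ncard_le_ncard ((subset_insert y X).trans (subset_insert e _))
    (M.ground_finite.subset (hEY' ▸ sdiff_subset))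
  have hrX' : r M (insert y X) = r M X := r_insert_of_mem_closure hyX
  have hreX' : r M (insert e (insert y X)) = r M X := by
    rw [← hrX']
    exact r_insert_of_mem_closure
      (M.closure_subset_closure (subset_insert y X) hsep.mem_closure_left)
  have hreY' : r M (insert e (Y \ {y})) ≤ r M Y :=
    (r_mono (insert_subset_insert sdiff_subset)).trans_eq
      (r_insert_of_mem_closure hsep.mem_closure_right)
  have hrY' : r M (Y \ {y}) ≤ r M Y := r_mono sdiff_subset
  have hlamY' : 2 ≤ lam M (Y \ {y}) := by
    exact_mod_cast hM.le_lam hY'E le_rfl (by omega) (by rw [hEY']; omega)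
  rw [lam, hEY', hreX'] at hlamY'
  refine hsep.insert_diff_singleton_of_lam_le hM hy ?_ ?_ (by omega)
  · rw [lam, hEX']; omega
  · rw [lam, hEY', hreX']; omega

lemma exists_triangle_mem_of_r_insert_le_two (hr : r M (insert e (Y \ {y})) ≤ 2) :
    ∃ T, Triangle M T ∧ e ∈ T := by
  have hYfin := M.set_finite Y hsep.subset_ground_right
  have hY3 := hsep.three_le_ncard_right
  have hE : 4 ≤ M.E.ncard := by
    have := ncard_le_ncard (hsep.ground_diff_left ▸ sdiff_subset) M.ground_finite
    have := ncard_insert_of_notMem hsep.notMem_right hYfin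
    omega
  have hZ3 : 3 ≤ (insert e (Y \ {y})).ncard := by
    rwa [ncard_insert_of_notMem (fun h => hsep.notMem_right h.1) hYfin.sdiff,
      ncard_sdiff_singleton_add_one hy hYfin]
  have hZE : insert e (Y \ {y}) ⊆ M.E :=
    insert_subset hsep.mem_ground (sdiff_subset.trans hsep.subset_ground_right)
  exact hM.exists_triangle_mem hE hZE hZ3 hr (mem_insert e _)

lemma insert_diff_singleton_of_mem_dual_closure (hyX : y ∈ M✶.closure X)
    (hT : ∀ T, Triangle M T → e ∉ T) : VertThreeSep M (insert y X) e (Y \ {y}) := by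
  have hrXY := hsep.r_add_r_eq
  have hXE := hsep.subset_ground_left
  have heE := hsep.mem_ground
  have hEX' := hsep.ground_diff_insert hy
  have hyX' : y ∉ X := fun h => disjoint_left.1 hsep.disjoint h hy
  have hyeX : y ∉ insert e X := by
    rintro (rfl | h)
    exacts [hsep.notMem_right hy, hyX' h]
  have hreY' : r M (insert e (Y \ {y})) + 1 = r M Y := by
    have h := r_diff_insert_add_one_of_mem_dual_closure hXE hyX' hyX
    rwa [hEX', hsep.ground_diff_left, r_insert_of_mem_closure hsep.mem_closure_right] at h
  have hrY' : r M (Y \ {y}) + 1 = r M Y := by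
    have h := r_diff_insert_add_one_of_mem_dual_closure (insert_subset heE hXE) hyeX
      (M✶.closure_subset_closure (subset_insert e X) hyX)
    rwa [hsep.ground_diff_insert_insert, hsep.ground_diff_insert_left] at h
  have hrX' := r_insert_le (M := M) y X
  have hreX' : r M (insert e (insert y X)) = r M (insert y X) :=
    r_insert_of_mem_closure (M.closure_subset_closure (subset_insert y X) hsep.mem_closure_left)
  have hr : 3 ≤ r M (Y \ {y}) := by
    by_contra hlt
    obtain ⟨T, hTri, heT⟩ := hsep.exists_triangle_mem_of_r_insert_le_two hM hy (by omega)
    exact hT T hTri heT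
  refine hsep.insert_diff_singleton_of_lam_le hM hy ?_ ?_ hr
  · rw [lam, hEX']
    omega
  · rw [lam, hsep.ground_diff_diff_singleton hy, hreX']
    omega

end VertThreeSep

/-- Moving an element of `Y` across a vertical 3-separation `(X, {e}, Y)`:
if `y ∈ cl(X)`, or `y ∈ cl*(X)` and `e` is in no triangle, then
`(X ∪ {y}, {e}, Y − {y})` is again a vertical 3-separation. -/
theorem stmt14 (M : Matroid α) [M.Finite] (hM : ThreeConnected M)
    {X Y : Set α} {e y : α} (hsep : VertThreeSep M X e Y) (hy : y ∈ Y) :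
    (y ∈ M.closure X → VertThreeSep M (X ∪ {y}) e (Y \ {y})) ∧
    (y ∈ M✶.closure X → (∀ T, Triangle M T → e ∉ T) →
      VertThreeSep M (X ∪ {y}) e (Y \ {y})) := by
  rw [union_singleton]
  exact ⟨hsep.insert_diff_singleton_of_mem_closure hM hy,
    hsep.insert_diff_singleton_of_mem_dual_closure hM hy⟩
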